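/- arXiv:2602.16540 — 4 statements merged into one kernel-verified Lean document; each statement's English description precedes it below -/
import Mathlib

section
/- Let σ > 0, ρ ∈ (0, 1), and x > 0. Define the modified Bessel function of the first kind of order u ∈ ℝ by I_u(w) = Σ_{k=0}^∞ (w/2)^{2k+u} / (Γ(k+u+1) k!), and define the gamma AR(1) transition density f(ν | x) = (1/(σ²(1−ρ))) (ν/(ρx))^{(σ^{-2}−1)/2} exp(−(ν + ρx)/(σ²(1−ρ))) I_{σ^{-2}−1}( 2√(ρνx)/(σ²(1−ρ)) ) for ν > 0. Then ∫_0^∞ f(ν | x) dν = 1, i.e. f(· | x) is a probability density on (0, ∞). -/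
open MeasureTheory Real

/-- Modified Bessel function of the first kind of order `u`, defined by its
power series `I_u(w) = Σ_{k} (w/2)^{2k+u} / (Γ(k+u+1) k!)`. -/
noncomputable def besselI (u w : ℝ) : ℝ :=
  ∑' k : ℕ, (w / 2) ^ (2 * (k : ℝ) + u) / (Real.Gamma ((k : ℝ) + u + 1) * (Nat.factorial k : ℝ))

/-- Transition density of the gamma AR(1) process of Sim (1990) with mean 1 and
variance `σ²`: density of `ν_t` at `ν` given `ν_{t-1} = x`. -/
noncomputable def garDensity (σ ρ x ν : ℝ) : ℝ :=
  (1 / (σ ^ 2 * (1 - ρ))) * (ν / (ρ * x)) ^ (((σ ^ 2)⁻¹ - 1) / 2)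
    * Real.exp (-(ν + ρ * x) / (σ ^ 2 * (1 - ρ)))
    * besselI ((σ ^ 2)⁻¹ - 1) (2 * Real.sqrt (ρ * ν * x) / (σ ^ 2 * (1 - ρ)))

open Set in
lemma gar_integrable_aux {s r : ℝ} (hs : 0 < s) (hr : 0 < r) :
    IntegrableOn (fun ν : ℝ => ν ^ (s - 1) * Real.exp (-(r * ν))) (Set.Ioi 0) := by
  have h0 : IntegrableOn (fun t : ℝ => Real.exp (-t) * t ^ (s - 1)) (Set.Ioi 0) :=
    Real.GammaIntegral_convergent hs
  have h1 : IntegrableOn (fun ν : ℝ => Real.exp (-(r * ν)) * (r * ν) ^ (s - 1)) (Set.Ioi 0) := by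
    have := (integrableOn_Ioi_comp_mul_left_iff
      (fun t : ℝ => Real.exp (-t) * t ^ (s - 1)) 0 hr).mpr
    rw [mul_zero] at this
    exact this h0
  have h2 := h1.const_mul (r ^ (s - 1))⁻¹
  refine IntegrableOn.congr_fun h2 (fun ν hν => ?_) measurableSet_Ioi
  have hν : (0:ℝ) < ν := hν
  rw [Real.mul_rpow hr.le hν.le]
  field_simp [(Real.rpow_pos_of_pos hr (s-1)).ne']

lemma gar_per_k {a c b ν : ℝ} (ha : 0 < a) (hc : 0 < c) (hb : 0 < b) (hν : 0 < ν) (k : ℕ) :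
    (1 / c) * (ν / b) ^ ((a - 1) / 2) * Real.exp (-(ν + b) / c) *
      ((Real.sqrt (b * ν) / c) ^ (2 * (k : ℝ) + (a - 1)) /
        (Real.Gamma ((k : ℝ) + (a - 1) + 1) * (k.factorial : ℝ)))
    = (Real.exp (-(b / c)) * b ^ k /
        (c ^ (2 * k) * c ^ a * (k.factorial : ℝ) * Real.Gamma ((k : ℝ) + a))) *
      (ν ^ ((k : ℝ) + a - 1) * Real.exp (-((1 / c) * ν))) := by
  have hbν : (0:ℝ) < b * ν := mul_pos hb hν
  have hΓ : (0:ℝ) < Real.Gamma ((k : ℝ) + a) := Real.Gamma_pos_of_pos (by positivity)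
  have hk : (0:ℝ) < (k.factorial : ℝ) := by exact_mod_cast k.factorial_pos
  rw [show (k : ℝ) + (a - 1) + 1 = (k : ℝ) + a by ring]
  rw [Real.div_rpow (Real.sqrt_nonneg _) hc.le, Real.sqrt_eq_rpow,
    ← Real.rpow_mul hbν.le,
    show (1 / 2) * (2 * (k : ℝ) + (a - 1)) = (k : ℝ) + (a - 1) / 2 by ring,
    Real.mul_rpow hb.le hν.le,
    Real.rpow_add hb, Real.rpow_add hν, Real.rpow_natCast, Real.rpow_natCast,
    Real.div_rpow hν.le hb.le,
    show (2 * (k : ℝ) + (a - 1)) = (2 * k : ℕ) + (a - 1) by push_cast; ring,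
    Real.rpow_add hc, Real.rpow_natCast, Real.rpow_sub hc, Real.rpow_one]
  rw [show -(ν + b) / c = -(b / c) + -((1 / c) * ν) by field_simp; ring, Real.exp_add]
  have h1 : ν ^ ((k:ℝ) + a - 1) = ν ^ k * ν ^ ((a-1)/2) * ν ^ ((a-1)/2) := by
    rw [← Real.rpow_natCast ν k, ← Real.rpow_add hν, ← Real.rpow_add hν]
    congr 1; ring
  have hb2 : (0:ℝ) < b ^ ((a-1)/2) := Real.rpow_pos_of_pos hb _
  have hν2 : (0:ℝ) < ν ^ ((a-1)/2) := Real.rpow_pos_of_pos hν _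
  have hca : (0:ℝ) < c ^ a := Real.rpow_pos_of_pos hc _
  field_simp
  rw [h1]
  ring

open Set

/-- The gamma AR(1) transition density integrates to one: `∫_0^∞ f(ν | x) dν = 1`. -/
theorem garDensity_integral_one (σ ρ x : ℝ) (hσ : 0 < σ) (hρ : ρ ∈ Set.Ioo (0 : ℝ) 1)
    (hx : 0 < x) :
    ∫ ν in Set.Ioi (0 : ℝ), garDensity σ ρ x ν = 1 := by
  obtain ⟨hρ0, hρ1⟩ := hρ
  set a : ℝ := (σ ^ 2)⁻¹ with ha_def
  set c : ℝ := σ ^ 2 * (1 - ρ) with hc_def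
  set b : ℝ := ρ * x with hb_def
  have ha : 0 < a := by rw [ha_def]; positivity
  have hc : 0 < c := by rw [hc_def]; exact mul_pos (by positivity) (by linarith)
  have hb : 0 < b := mul_pos hρ0 hx
  have hΓk : ∀ k : ℕ, (0:ℝ) < Real.Gamma ((k:ℝ) + a) :=
    fun k => Real.Gamma_pos_of_pos (by positivity)
  set g : ℕ → ℝ → ℝ := fun k ν =>
    (Real.exp (-(b / c)) * b ^ k /
        (c ^ (2 * k) * c ^ a * (k.factorial : ℝ) * Real.Gamma ((k : ℝ) + a))) *
      (ν ^ ((k : ℝ) + a - 1) * Real.exp (-((1 / c) * ν))) with hg_def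
  have hgint : ∀ k, IntegrableOn (g k) (Ioi 0) := by
    intro k
    rw [hg_def]
    exact (gar_integrable_aux (s := (k:ℝ) + a) (r := 1/c)
      (by positivity) (by positivity)).const_mul _
  have hval : ∀ k, ∫ ν in Ioi (0:ℝ), g k ν
      = Real.exp (-(b / c)) * (b / c) ^ k / (k.factorial : ℝ) := by
    intro k
    rw [hg_def]
    rw [integral_const_mul,
      integral_rpow_mul_exp_neg_mul_Ioi (by positivity : (0:ℝ) < (k:ℝ) + a)
        (by positivity : (0:ℝ) < 1/c),
      one_div_one_div, Real.rpow_add hc, Real.rpow_natCast, div_pow]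
    have h1 := (hΓk k).ne'
    have h2 : (0:ℝ) < c ^ a := Real.rpow_pos_of_pos hc _
    have h3 : (0:ℝ) < (k.factorial : ℝ) := by exact_mod_cast k.factorial_pos
    field_simp
    ring
  have hnorm : ∀ k, ∫ ν in Ioi (0:ℝ), ‖g k ν‖ = ∫ ν in Ioi (0:ℝ), g k ν := by
    intro k
    refine setIntegral_congr_fun measurableSet_Ioi (fun ν hν => ?_)
    have hν : (0:ℝ) < ν := hν
    rw [hg_def]
    refine Real.norm_of_nonneg (mul_nonneg (div_nonneg (by positivity) ?_) (by positivity))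
    have := hΓk k
    positivity
  have hsum : Summable fun k => ∫ ν in Ioi (0:ℝ), ‖g k ν‖ := by
    have heq : (fun k => ∫ ν in Ioi (0:ℝ), ‖g k ν‖)
        = fun k => Real.exp (-(b / c)) * ((b / c) ^ k / (k.factorial : ℝ)) := by
      funext k; rw [hnorm k, hval k, mul_div_assoc]
    rw [heq]
    exact (Real.summable_pow_div_factorial _).mul_left _
  have hpt : ∀ ν ∈ Ioi (0:ℝ), garDensity σ ρ x ν = ∑' k, g k ν := by
    intro ν hν
    have hν : (0:ℝ) < ν := hν
    have harg : 2 * Real.sqrt (ρ * ν * x) / c / 2 = Real.sqrt (b * ν) / c := by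
      rw [show ρ * ν * x = b * ν by rw [hb_def]; ring]; ring
    simp only [garDensity, besselI, ← hc_def, ← ha_def, ← hb_def, harg, hg_def]
    rw [← tsum_mul_left]
    exact tsum_congr fun k => gar_per_k ha hc hb hν k
  calc ∫ ν in Ioi (0:ℝ), garDensity σ ρ x ν
      = ∫ ν in Ioi (0:ℝ), ∑' k, g k ν := setIntegral_congr_fun measurableSet_Ioi hpt
    _ = ∑' k, ∫ ν in Ioi (0:ℝ), g k ν :=
        (integral_tsum_of_summable_integral_norm hgint hsum).symm
    _ = ∑' k, Real.exp (-(b / c)) * (b / c) ^ k / (k.factorial : ℝ) := tsum_congr hval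
    _ = 1 := by
        have hsum1 : ∑' k : ℕ, (b / c) ^ k / (k.factorial : ℝ) = Real.exp (b / c) := by
          rw [Real.exp_eq_exp_ℝ, NormedSpace.exp_eq_tsum_div]
        simp_rw [mul_div_assoc]
        rw [tsum_mul_left, hsum1, ← Real.exp_add]
        simp
end

section
/- Let σ > 0 and ρ ∈ (0, 1). Define the modified Bessel function of the first kind of order u ∈ ℝ by I_u(w) = Σ_{k=0}^∞ (w/2)^{2k+u} / (Γ(k+u+1) k!), the gamma AR(1) transition density f(ν | x) = (1/(σ²(1−ρ))) (ν/(ρx))^{(σ^{-2}−1)/2} exp(−(ν + ρx)/(σ²(1−ρ))) I_{σ^{-2}−1}( 2√(ρνx)/(σ²(1−ρ)) ) for ν, x > 0, and the gamma density with shape σ^{-2} and rate σ^{-2}, g(x) = (σ^{-2})^{σ^{-2}} x^{σ^{-2}−1} exp(−x/σ²) / Γ(σ^{-2}) for x > 0. Then for every ν > 0, ∫_0^∞ f(ν | x) g(x) dx = g(ν); that is, the gamma distribution with shape and rate σ^{-2} is invariant for the transition kernel f. -/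
open MeasureTheory Real

/-- Density of the gamma distribution with shape `σ⁻²` and rate `σ⁻²`. -/
noncomputable def gammaStationaryDensity (σ x : ℝ) : ℝ :=
  ((σ ^ 2)⁻¹) ^ ((σ ^ 2)⁻¹) * x ^ ((σ ^ 2)⁻¹ - 1) * Real.exp (-x / σ ^ 2)
    / Real.Gamma ((σ ^ 2)⁻¹)

/-!
Let `c = 1 / (σ² (1 - ρ))`, so that `c = σ⁻² + c ρ`. The joint density `f(ν | x) g(x)` is
symmetric in `(x, ν)` (detailed balance): the Bessel factor only sees `x ν`, the power
prefactors trade places, and the exponents agree because of the relation for `c`. Hence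
`∫ f(ν | x) g(x) dx = g(ν) ∫ f(x | ν) dx`, and the kernel integrates to one because, expanding
the Bessel series, `f(· | x)` is the mixture of the gamma densities of shape `k + σ⁻²` and
rate `c` with Poisson(`c ρ x`) weights.
-/

open ProbabilityTheory Set

theorem integral_tsum_mul_eq_tsum_of_integral_eq_one {α : Type*} [MeasurableSpace α]
    {μ : Measure α} {p : ℕ → ℝ} {G : ℕ → α → ℝ} (hp : Summable p)
    (hG_int : ∀ k, Integrable (G k) μ) (hG_nonneg : ∀ k, 0 ≤ᵐ[μ] G k)
    (hG_one : ∀ k, ∫ x, G k x ∂μ = 1) :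
    ∫ x, ∑' k, p k * G k x ∂μ = ∑' k, p k := by
  have h_norm : ∀ k, ∫ x, ‖p k * G k x‖ ∂μ = |p k| := fun k => by
    simp_rw [norm_mul, Real.norm_eq_abs]
    rw [integral_const_mul, integral_congr_ae ((hG_nonneg k).mono fun x hx => abs_of_nonneg hx),
      hG_one, mul_one]
  rw [← integral_tsum_of_summable_integral_norm (fun k => (hG_int k).const_mul (p k))
    (by simpa only [h_norm] using hp.abs)]
  simp_rw [integral_const_mul, hG_one, mul_one]

theorem integrable_gammaPDFReal {a r : ℝ} (ha : 0 < a) (hr : 0 < r) :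
    Integrable (gammaPDFReal a r) := by
  refine ⟨(measurable_gammaPDFReal a r).aestronglyMeasurable, ?_⟩
  rw [hasFiniteIntegral_iff_ofReal (ae_of_all _ (gammaPDFReal_nonneg ha hr))]
  exact (lintegral_gammaPDF_eq_one ha hr).trans_lt ENNReal.one_lt_top

theorem integral_gammaPDFReal_Ioi {a r : ℝ} (ha : 0 < a) (hr : 0 < r) :
    ∫ x in Ioi 0, gammaPDFReal a r x = 1 := by
  have h (x : ℝ) (hx : x ∈ Ioi 0) :
      gammaPDFReal a r x = r ^ a / Gamma a * (x ^ (a - 1) * exp (-(r * x))) := by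
    rw [gammaPDFReal, if_pos (le_of_lt hx), mul_assoc]
  rw [setIntegral_congr_fun measurableSet_Ioi h, integral_const_mul,
    integral_rpow_mul_exp_neg_mul_Ioi ha hr, one_div, inv_rpow hr.le]
  have hr_pow := (rpow_pos_of_pos hr a).ne'
  have hΓ := (Gamma_pos_of_pos ha).ne'
  field_simp

theorem gammaPDFReal_eq_mul_rpow {a r x : ℝ} (hr : 0 < r) (hx : 0 ≤ x) :
    gammaPDFReal a r x = r * (r * x) ^ (a - 1) * exp (-(r * x)) / Gamma a := by
  rw [gammaPDFReal, if_pos hx, mul_rpow hr.le hx, rpow_sub_one hr.ne']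
  field_simp

theorem div_rpow_mul_sqrt_mul_rpow {p q t : ℝ} (hp : 0 < p) (hq : 0 < q) (ht : 0 < t)
    (u : ℝ) (k : ℕ) :
    (p / q) ^ (u / 2) * (√(p * q) * t) ^ (2 * (k : ℝ) + u)
      = (t * p) ^ u * (t ^ 2 * p * q) ^ k := by
  obtain ⟨s, hs, rfl⟩ : ∃ s, 0 < s ∧ s ^ 2 = p := ⟨√p, sqrt_pos.2 hp, sq_sqrt hp.le⟩
  obtain ⟨w, hw, rfl⟩ : ∃ w, 0 < w ∧ w ^ 2 = q := ⟨√q, sqrt_pos.2 hq, sq_sqrt hq.le⟩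
  have h_sqrt : √(s ^ 2 * w ^ 2) = s * w := by rw [← mul_pow, sqrt_sq (by positivity)]
  have h_half : (s ^ 2 / w ^ 2) ^ (u / 2) = (s / w) ^ u := by
    rw [← div_pow, ← rpow_natCast, ← rpow_mul (by positivity)]
    ring_nf
  have h_even : (s * w * t) ^ (2 * (k : ℝ)) = (t ^ 2 * s ^ 2 * w ^ 2) ^ k := by
    rw [show 2 * (k : ℝ) = ((2 * k : ℕ) : ℝ) by push_cast; ring, rpow_natCast, pow_mul]
    ring
  have h_odd : (s / w) ^ u * (s * w * t) ^ u = (t * s ^ 2) ^ u := by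
    rw [← mul_rpow (by positivity) (by positivity)]
    congr 1
    field_simp
  rw [h_sqrt, h_half, rpow_add (by positivity), h_even]
  linear_combination (t ^ 2 * s ^ 2 * w ^ 2) ^ k * h_odd

theorem div_mul_rpow_mul_rpow_comm {p q r : ℝ} (hp : 0 < p) (hq : 0 < q) (hr : 0 < r) (u : ℝ) :
    (p / (r * q)) ^ (u / 2) * q ^ u = (q / (r * p)) ^ (u / 2) * p ^ u := by
  have key (p q : ℝ) (hp : 0 < p) (hq : 0 < q) :
      (p / (r * q)) ^ (u / 2) * q ^ u = (p * q / r) ^ (u / 2) := by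
    rw [show q ^ u = (q ^ 2) ^ (u / 2) by rw [← rpow_natCast, ← rpow_mul hq.le]; ring_nf,
      ← mul_rpow (by positivity) (by positivity)]
    congr 1
    field_simp
  rw [key p q hp hq, key q p hq hp, mul_comm p q]

noncomputable def garRate (σ ρ : ℝ) : ℝ := (σ ^ 2 * (1 - ρ))⁻¹

theorem garRate_pos {σ ρ : ℝ} (hσ : σ ≠ 0) (hρ : ρ < 1) : 0 < garRate σ ρ :=
  inv_pos.2 (mul_pos (by positivity) (sub_pos.2 hρ))

theorem garDensity_eq_tsum_poisson_mul_gammaPDFReal {σ ρ x ν : ℝ} (hσ : σ ≠ 0)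
    (hρ : ρ ∈ Ioo 0 1) (hx : 0 < x) (hν : 0 < ν) :
    garDensity σ ρ x ν = ∑' k : ℕ, exp (-(garRate σ ρ * ρ * x)) * (garRate σ ρ * ρ * x) ^ k
      / k.factorial * gammaPDFReal (k + (σ ^ 2)⁻¹) (garRate σ ρ) ν := by
  set c := garRate σ ρ
  obtain ⟨hρ0, hρ1⟩ := hρ
  set a := (σ ^ 2)⁻¹
  have hc : 0 < c := garRate_pos hσ hρ1
  have h_rate : 1 / (σ ^ 2 * (1 - ρ)) = c := one_div _
  have h_exp : -(ν + ρ * x) / (σ ^ 2 * (1 - ρ)) = -(c * ν) + -(c * ρ * x) := by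
    simp only [c, garRate]; ring
  have h_arg : 2 * √(ρ * ν * x) / (σ ^ 2 * (1 - ρ)) / 2 = √(ν * (ρ * x)) * c := by
    simp only [c, garRate]; rw [show ρ * ν * x = ν * (ρ * x) by ring]; ring
  rw [garDensity, besselI, h_rate, h_exp, exp_add, ← tsum_mul_left]
  refine tsum_congr fun k => ?_
  have h_bessel := div_rpow_mul_sqrt_mul_rpow hν (mul_pos hρ0 hx) hc (a - 1) k
  rw [h_arg, show (k : ℝ) + (a - 1) + 1 = k + a by ring, gammaPDFReal_eq_mul_rpow hc hν.le,
    show (k : ℝ) + a - 1 = a - 1 + k by ring, rpow_add_natCast (by positivity)]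
  linear_combination
    c * exp (-(c * ν)) * exp (-(c * ρ * x)) / (Gamma (k + a) * k.factorial) * h_bessel

theorem integral_garDensity_Ioi {σ ρ x : ℝ} (hσ : σ ≠ 0) (hρ : ρ ∈ Ioo 0 1) (hx : 0 < x) :
    ∫ ν in Ioi 0, garDensity σ ρ x ν = 1 := by
  have hc := garRate_pos hσ hρ.2
  have ha : 0 < (σ ^ 2)⁻¹ := by positivity
  have h_poisson : HasSum (fun k : ℕ => exp (-(garRate σ ρ * ρ * x))
      * (garRate σ ρ * ρ * x) ^ k / k.factorial) 1 :=
    hasSum_one_poissonMeasure ⟨_, (mul_pos (mul_pos hc hρ.1) hx).le⟩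
  rw [setIntegral_congr_fun measurableSet_Ioi fun ν hν =>
      garDensity_eq_tsum_poisson_mul_gammaPDFReal hσ hρ hx hν,
    integral_tsum_mul_eq_tsum_of_integral_eq_one h_poisson.summable
      (fun k => (integrable_gammaPDFReal (by positivity) hc).integrableOn)
      (fun k => ae_of_all _ (gammaPDFReal_nonneg (by positivity) hc))
      (fun k => integral_gammaPDFReal_Ioi (by positivity) hc)]
  exact h_poisson.tsum_eq

theorem garDensity_mul_gammaStationaryDensity_comm {σ ρ x ν : ℝ} (hρ0 : 0 < ρ)
    (hρ1 : ρ ≠ 1) (hx : 0 < x) (hν : 0 < ν) :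
    garDensity σ ρ x ν * gammaStationaryDensity σ x
      = garDensity σ ρ ν x * gammaStationaryDensity σ ν := by
  set a := (σ ^ 2)⁻¹
  have h_pow := div_mul_rpow_mul_rpow_comm hν hx hρ0 (a - 1)
  have h_exp : exp (-(ν + ρ * x) / (σ ^ 2 * (1 - ρ))) * exp (-x / σ ^ 2)
      = exp (-(x + ρ * ν) / (σ ^ 2 * (1 - ρ))) * exp (-ν / σ ^ 2) := by
    rw [← exp_add, ← exp_add]
    congr 1
    have : 1 - ρ ≠ 0 := sub_ne_zero.2 hρ1.symm
    field_simp
    ring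
  simp only [garDensity, gammaStationaryDensity, show ρ * x * ν = ρ * ν * x by ring]
  set bessel := besselI (a - 1) (2 * √(ρ * ν * x) / (σ ^ 2 * (1 - ρ)))
  linear_combination (1 / (σ ^ 2 * (1 - ρ)) * bessel * a ^ a / Gamma a)
    * (exp (-(ν + ρ * x) / (σ ^ 2 * (1 - ρ))) * exp (-x / σ ^ 2) * h_pow
      + (x / (ρ * ν)) ^ ((a - 1) / 2) * ν ^ (a - 1) * h_exp)

/-- The gamma distribution with shape and rate both `σ⁻²` is invariant for the
gamma AR(1) transition kernel: `∫_0^∞ f(ν | x) g(x) dx = g(ν)` for every `ν > 0`. -/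
theorem garDensity_gamma_invariant (σ ρ : ℝ) (hσ : 0 < σ) (hρ : ρ ∈ Set.Ioo (0 : ℝ) 1)
    (ν : ℝ) (hν : 0 < ν) :
    ∫ x in Set.Ioi (0 : ℝ), garDensity σ ρ x ν * gammaStationaryDensity σ x
      = gammaStationaryDensity σ ν := by
  calc ∫ x in Ioi 0, garDensity σ ρ x ν * gammaStationaryDensity σ x
      = ∫ x in Ioi 0, gammaStationaryDensity σ ν * garDensity σ ρ ν x :=
        setIntegral_congr_fun measurableSet_Ioi fun x hx =>
          (garDensity_mul_gammaStationaryDensity_comm hρ.1 hρ.2.ne hx hν).trans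
            (mul_comm _ _)
    _ = gammaStationaryDensity σ ν := by
        rw [integral_const_mul, integral_garDensity_Ioi hσ.ne' hρ hν, mul_one]
end

section
/- Let γ : ℤ → ℝ be an even function (γ(−l) = γ(l)) with Σ_{l ∈ ℤ} |γ(l)| < ∞, and for each n ≥ 1 let c_{n,1}, …, c_{n,n} ∈ ℝ be a triangular array. For l ∈ ℤ define S_n(l) = n^{-1} Σ_t c_{n,t} c_{n,t+l}, the sum over all t with 1 ≤ t ≤ n and 1 ≤ t + l ≤ n. Assume there is a bounded function w : ℤ → ℝ such that sup_{|l| < n} |S_n(l) − w(l)| → 0 as n → ∞, and that sup_{n, l} |S_n(l)| < ∞. Then n^{-1} Σ_{t=1}^n Σ_{k=1}^n c_{n,t} c_{n,k} γ(t − k) → Σ_{l ∈ ℤ} γ(l) w(l) as n → ∞. -/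
open Finset Filter Topology

/-- `S c n l = n⁻¹ Σ_{t : 1 ≤ t ≤ n, 1 ≤ t+l ≤ n} c_{n,t} c_{n,t+l}`. -/
noncomputable def lagSum (c : ℕ → ℕ → ℝ) (n : ℕ) (l : ℤ) : ℝ :=
  (n : ℝ)⁻¹ * ∑ t ∈ (Finset.Icc 1 n).filter (fun t : ℕ => 1 ≤ (t : ℤ) + l ∧ (t : ℤ) + l ≤ (n : ℤ)),
    c n t * c n ((t : ℤ) + l).toNat

lemma reindex_double_sum (γ : ℤ → ℝ) (hγeven : ∀ l : ℤ, γ (-l) = γ l)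
    (c : ℕ → ℕ → ℝ) (n : ℕ) :
    (n : ℝ)⁻¹ *
        ∑ t ∈ Finset.Icc 1 n, ∑ k ∈ Finset.Icc 1 n, c n t * c n k * γ ((t : ℤ) - (k : ℤ))
      = ∑ l ∈ Finset.Icc (1 - (n : ℤ)) ((n : ℤ) - 1), γ l * lagSum c n l := by
  unfold lagSum
  simp only [mul_left_comm _ ((n : ℝ)⁻¹) _]
  rw [← Finset.mul_sum]
  congr 1
  rw [← Finset.sum_product']
  simp_rw [Finset.mul_sum]
  rw [Finset.sum_sigma']
  refine Finset.sum_nbij' (fun p => ⟨(p.2 : ℤ) - (p.1 : ℤ), p.1⟩)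
    (fun q => (q.2, ((q.2 : ℤ) + q.1).toNat)) ?_ ?_ ?_ ?_ ?_
  · rintro ⟨t, k⟩ hp
    simp only [Finset.mem_product, Finset.mem_Icc] at hp
    simp only [Finset.mem_sigma, Finset.mem_Icc, Finset.mem_filter]
    refine ⟨⟨by omega, by omega⟩, ⟨hp.1.1, hp.1.2⟩, by omega, by omega⟩
  · rintro ⟨l, t⟩ hq
    simp only [Finset.mem_sigma, Finset.mem_Icc, Finset.mem_filter] at hq
    simp only [Finset.mem_product, Finset.mem_Icc]
    omega
  · rintro ⟨t, k⟩ hp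
    simp only [Finset.mem_product, Finset.mem_Icc] at hp
    simp only [Prod.mk.injEq]
    exact ⟨trivial, by omega⟩
  · rintro ⟨l, t⟩ hq
    simp only [Finset.mem_sigma, Finset.mem_Icc, Finset.mem_filter] at hq
    have h1 : ((((t : ℤ) + l).toNat : ℤ)) - (t : ℤ) = l := by omega
    exact Sigma.ext h1 HEq.rfl
  · rintro ⟨t, k⟩ hp
    simp only [Finset.mem_product, Finset.mem_Icc] at hp
    have h1 : ((t : ℤ) + ((k : ℤ) - (t : ℤ))).toNat = k := by omega
    have h2 : γ ((t : ℤ) - (k : ℤ)) = γ ((k : ℤ) - (t : ℤ)) := by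
      rw [← hγeven]; ring_nf
    simp only [h1, h2]
    ring

/-- Deterministic double-sum limit (the variance computation in the CLT for
GLMs driven by latent processes): if the lagged sums `S_n(l)` converge to `w(l)`
uniformly in `|l| < n`, are uniformly bounded, `w` is bounded and
`Σ_l |γ(l)| < ∞` with `γ` even, then
`n⁻¹ Σ_{t,k} c_{n,t} c_{n,k} γ(t − k) → Σ_l γ(l) w(l)`. -/
theorem double_sum_limit
    (γ : ℤ → ℝ) (hγeven : ∀ l : ℤ, γ (-l) = γ l)
    (hγsum : Summable fun l : ℤ => |γ l|)
    (c : ℕ → ℕ → ℝ) (w : ℤ → ℝ)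
    (hwbdd : ∃ C : ℝ, ∀ l : ℤ, |w l| ≤ C)
    (hunif : ∀ ε > (0 : ℝ), ∃ N : ℕ, ∀ n ≥ N, ∀ l : ℤ, |l| < (n : ℤ) →
      |lagSum c n l - w l| < ε)
    (hSbdd : ∃ C : ℝ, ∀ (n : ℕ) (l : ℤ), |lagSum c n l| ≤ C) :
    Tendsto
      (fun n : ℕ => (n : ℝ)⁻¹ *
        ∑ t ∈ Finset.Icc 1 n, ∑ k ∈ Finset.Icc 1 n, c n t * c n k * γ ((t : ℤ) - (k : ℤ)))
      atTop (𝓝 (∑' l : ℤ, γ l * w l)) := by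
  obtain ⟨Cw, hCw⟩ := hwbdd
  have hCw0 : 0 ≤ Cw := le_trans (abs_nonneg _) (hCw 0)
  -- Summability of γ * w
  have habs : ∀ l : ℤ, |γ l * w l| ≤ |γ l| * Cw := by
    intro l
    rw [abs_mul]
    exact mul_le_mul_of_nonneg_left (hCw l) (abs_nonneg _)
  have hsum : Summable fun l : ℤ => γ l * w l :=
    Summable.of_abs (Summable.of_nonneg_of_le (fun _ => abs_nonneg _) habs (hγsum.mul_right Cw))
  -- partial sums over Icc (1-n) (n-1) tend to the tsum
  have hmono : Monotone fun n : ℕ => Finset.Icc (1 - (n : ℤ)) ((n : ℤ) - 1) := by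
    intro a b hab
    apply Finset.Icc_subset_Icc <;> omega
  have hcov : ∀ x : ℤ, ∃ n : ℕ, x ∈ Finset.Icc (1 - (n : ℤ)) ((n : ℤ) - 1) := by
    intro x
    refine ⟨x.natAbs + 1, ?_⟩
    simp only [Finset.mem_Icc]
    omega
  have htends1 : Tendsto (fun n : ℕ => ∑ l ∈ Finset.Icc (1 - (n : ℤ)) ((n : ℤ) - 1), γ l * w l)
      atTop (𝓝 (∑' l : ℤ, γ l * w l)) :=
    hsum.hasSum.comp (tendsto_atTop_finset_of_monotone hmono hcov)
  -- the error term tends to 0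
  have htends2 : Tendsto (fun n : ℕ =>
      ∑ l ∈ Finset.Icc (1 - (n : ℤ)) ((n : ℤ) - 1), γ l * (lagSum c n l - w l)) atTop (𝓝 0) := by
    rw [Metric.tendsto_atTop]
    intro ε hε
    set G := ∑' l : ℤ, |γ l| with hG
    have hG0 : 0 ≤ G := tsum_nonneg fun _ => abs_nonneg _
    have hε' : (0 : ℝ) < ε / (G + 1) := div_pos hε (by linarith)
    obtain ⟨N, hN⟩ := hunif (ε / (G + 1)) hε'
    refine ⟨max N 1, fun n hn => ?_⟩
    have hn1 : 1 ≤ n := le_trans (le_max_right _ _) hn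
    have hnN : N ≤ n := le_trans (le_max_left _ _) hn
    rw [Real.dist_eq, sub_zero]
    calc |∑ l ∈ Finset.Icc (1 - (n : ℤ)) ((n : ℤ) - 1), γ l * (lagSum c n l - w l)|
        ≤ ∑ l ∈ Finset.Icc (1 - (n : ℤ)) ((n : ℤ) - 1), |γ l * (lagSum c n l - w l)| :=
          Finset.abs_sum_le_sum_abs _ _
      _ ≤ ∑ l ∈ Finset.Icc (1 - (n : ℤ)) ((n : ℤ) - 1), |γ l| * (ε / (G + 1)) := by
          apply Finset.sum_le_sum
          intro l hl
          simp only [Finset.mem_Icc] at hl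
          rw [abs_mul]
          refine mul_le_mul_of_nonneg_left (le_of_lt (hN n hnN l ?_)) (abs_nonneg _)
          rw [abs_lt]
          omega
      _ = (∑ l ∈ Finset.Icc (1 - (n : ℤ)) ((n : ℤ) - 1), |γ l|) * (ε / (G + 1)) := by
          rw [Finset.sum_mul]
      _ ≤ G * (ε / (G + 1)) := by
          apply mul_le_mul_of_nonneg_right _ (le_of_lt hε')
          exact Summable.sum_le_tsum _ (fun _ _ => abs_nonneg _) hγsum
      _ < ε := by
          rw [div_eq_inv_mul, ← mul_assoc]
          have : G * (G + 1)⁻¹ < 1 := by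
            rw [mul_inv_lt_iff₀ (by linarith)]
            linarith
          nlinarith [this, hε]
  -- combine
  have key : Tendsto (fun n : ℕ =>
      ∑ l ∈ Finset.Icc (1 - (n : ℤ)) ((n : ℤ) - 1), γ l * lagSum c n l)
      atTop (𝓝 (∑' l : ℤ, γ l * w l)) := by
    have heq : ∀ n : ℕ,
        ∑ l ∈ Finset.Icc (1 - (n : ℤ)) ((n : ℤ) - 1), γ l * lagSum c n l
          = (∑ l ∈ Finset.Icc (1 - (n : ℤ)) ((n : ℤ) - 1), γ l * (lagSum c n l - w l))
            + ∑ l ∈ Finset.Icc (1 - (n : ℤ)) ((n : ℤ) - 1), γ l * w l := by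
      intro n
      rw [← Finset.sum_add_distrib]
      congr 1
      ext l
      ring
    simp only [heq]
    have := htends2.add htends1
    simpa using this
  apply key.congr
  intro n
  exact (reindex_double_sum γ hγeven c n).symm
end

section
/- Let σ > 0 and ρ ∈ (−1, 1), let U and V be independent standard Gaussian random variables, and set Z₁ = −σ²/2 + σU, Z₂ = −σ²/2 + σ(ρU + √(1 − ρ²) V), ν₁ = exp(Z₁), ν₂ = exp(Z₂). Let μ₁, μ₂ > 0 and let Y₁, Y₂ be square-integrable random variables on the same probability space such that, with G = σ(ν₁, ν₂): E[Yᵢ | G] = μᵢνᵢ a.s. and E[(Yᵢ − μᵢνᵢ)² | G] = μᵢνᵢ a.s. for i = 1, 2 (conditional Poisson mean–variance relation), and E[Y₁Y₂ | G] = μ₁ν₁μ₂ν₂ a.s. Then E[(Y₁ − μ₁)²] − μ₁ = μ₁² (exp(σ²) − 1) and E[(Y₁ − μ₁)(Y₂ − μ₂)] = μ₁μ₂ (exp(σ²ρ) − 1). -/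
open MeasureTheory ProbabilityTheory Real ENNReal NNReal

lemma gauss_pdf_mul_exp (t : ℝ) :
    (Integrable (fun x => gaussianPDFReal 0 1 x * Real.exp (t * x)) (volume : Measure ℝ)) ∧
    ∫ x, gaussianPDFReal 0 1 x * Real.exp (t * x) = Real.exp (t ^ 2 / 2) := by
  have key : (fun x : ℝ => gaussianPDFReal 0 1 x * Real.exp (t * x))
      = fun x => ((Real.sqrt (2 * π))⁻¹ * Real.exp (t ^ 2 / 2)) * Real.exp (-(2⁻¹ : ℝ) * (x - t) ^ 2) := by
    funext x
    simp only [gaussianPDFReal, NNReal.coe_one, mul_one, sub_zero]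
    rw [mul_assoc, mul_assoc, ← Real.exp_add, ← Real.exp_add]
    ring_nf
  constructor
  · rw [key]
    exact ((integrable_exp_neg_mul_sq (by norm_num : (0:ℝ) < 2⁻¹)).comp_sub_right t).const_mul _
  · rw [key]
    rw [integral_const_mul]
    have : ∫ x : ℝ, Real.exp (-(2⁻¹:ℝ) * (x - t) ^ 2) = ∫ x : ℝ, Real.exp (-(2⁻¹:ℝ) * x ^ 2) :=
      integral_sub_right_eq_self (fun x => Real.exp (-(2⁻¹:ℝ) * x ^ 2)) t
    rw [this, integral_gaussian]
    rw [show π / 2⁻¹ = 2 * π by ring]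
    field_simp [Real.sqrt_eq_iff_eq_sq, Real.sqrt_ne_zero', Real.pi_pos]

lemma gauss_exp (t : ℝ) :
    (Integrable (fun x => Real.exp (t * x)) (gaussianReal 0 1)) ∧
    ∫ x, Real.exp (t * x) ∂(gaussianReal 0 1) = Real.exp (t ^ 2 / 2) := by
  rw [gaussianReal_of_var_ne_zero 0 one_ne_zero]
  have hpdf : gaussianPDF 0 1 = fun x => ((gaussianPDFReal 0 1 x).toNNReal : ℝ≥0∞) := rfl
  have hmeas : Measurable fun x => (gaussianPDFReal 0 1 x).toNNReal :=
    (measurable_gaussianPDFReal 0 1).real_toNNReal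
  rw [hpdf]
  constructor
  · rw [integrable_withDensity_iff_integrable_smul hmeas]
    refine (gauss_pdf_mul_exp t).1.congr (ae_of_all _ fun x => ?_)
    simp [NNReal.smul_def, Real.coe_toNNReal _ (gaussianPDFReal_nonneg 0 1 x)]
  · rw [integral_withDensity_eq_integral_smul hmeas]
    rw [← (gauss_pdf_mul_exp t).2]
    congr 1; funext x
    simp [NNReal.smul_def, Real.coe_toNNReal _ (gaussianPDFReal_nonneg 0 1 x)]

lemma gauss_exp_omega {Ω : Type*} [MeasurableSpace Ω] {P : Measure Ω}
    {U : Ω → ℝ} (hUmeas : Measurable U) (hU : P.map U = gaussianReal 0 1) (t : ℝ) :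
    (Integrable (fun ω => Real.exp (t * U ω)) P) ∧
    ∫ ω, Real.exp (t * U ω) ∂P = Real.exp (t ^ 2 / 2) := by
  have h1 : Integrable (fun x => Real.exp (t * x)) (P.map U) := hU ▸ (gauss_exp t).1
  constructor
  · exact (integrable_map_measure h1.aestronglyMeasurable hUmeas.aemeasurable).mp h1
  · rw [← (gauss_exp t).2, ← hU, integral_map hUmeas.aemeasurable h1.aestronglyMeasurable]

lemma L2mul {Ω : Type*} [MeasurableSpace Ω] {P : Measure Ω} {f g : Ω → ℝ}
    (hf : MemLp f 2 P) (hg : MemLp g 2 P) : Integrable (fun ω => f ω * g ω) P := by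
  have h : MemLp (g • f) 1 P := hf.smul hg (hpqr := ⟨by rw [ENNReal.inv_two_add_inv_two, inv_one]⟩)
  exact (memLp_one_iff_integrable.mp h).congr (ae_of_all _ fun ω => by
    simp [smul_eq_mul, mul_comm])

/-- Population moment identities for the Poisson GLM driven by a log-normal AR(1)
latent process: with `ν₁ = exp(Z₁)`, `ν₂ = exp(Z₂)` bivariate log-normal built from
independent standard Gaussians (marginals `N(−σ²/2, σ²)`, `Cov(Z₁, Z₂) = ρσ²`), and
`Y₁, Y₂` conditionally Poisson-like given `G = σ(ν₁, ν₂)` with means `μᵢνᵢ`,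
conditional variances `μᵢνᵢ`, and conditional uncorrelatedness, one has
`E[(Y₁ − μ₁)²] − μ₁ = μ₁²(e^{σ²} − 1)` and
`E[(Y₁ − μ₁)(Y₂ − μ₂)] = μ₁μ₂(e^{σ²ρ} − 1)`. -/
theorem poisson_lognormal_moment_identities
    {Ω : Type*} [MeasurableSpace Ω] {P : Measure Ω} [IsProbabilityMeasure P]
    (σ ρ : ℝ) (hσ : 0 < σ) (hρ : ρ ∈ Set.Ioo (-1 : ℝ) 1)
    (U V : Ω → ℝ) (hUmeas : Measurable U) (hVmeas : Measurable V)
    (hUV : IndepFun U V P)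
    (hU : P.map U = gaussianReal 0 1) (hV : P.map V = gaussianReal 0 1)
    (Z₁ Z₂ ν₁ ν₂ : Ω → ℝ)
    (hZ₁ : Z₁ = fun ω => -σ ^ 2 / 2 + σ * U ω)
    (hZ₂ : Z₂ = fun ω => -σ ^ 2 / 2 + σ * (ρ * U ω + Real.sqrt (1 - ρ ^ 2) * V ω))
    (hν₁ : ν₁ = fun ω => Real.exp (Z₁ ω)) (hν₂ : ν₂ = fun ω => Real.exp (Z₂ ω))
    (μ₁ μ₂ : ℝ) (hμ₁ : 0 < μ₁) (hμ₂ : 0 < μ₂)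
    (Y₁ Y₂ : Ω → ℝ) (hY₁ : MemLp Y₁ 2 P) (hY₂ : MemLp Y₂ 2 P)
    (hcond₁ : P[Y₁ | MeasurableSpace.comap ν₁ inferInstance ⊔ MeasurableSpace.comap ν₂ inferInstance]
      =ᵐ[P] fun ω => μ₁ * ν₁ ω)
    (hcond₂ : P[Y₂ | MeasurableSpace.comap ν₁ inferInstance ⊔ MeasurableSpace.comap ν₂ inferInstance]
      =ᵐ[P] fun ω => μ₂ * ν₂ ω)
    (hcondvar₁ : P[(fun ω => (Y₁ ω - μ₁ * ν₁ ω) ^ 2) | MeasurableSpace.comap ν₁ inferInstance ⊔ MeasurableSpace.comap ν₂ inferInstance]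
      =ᵐ[P] fun ω => μ₁ * ν₁ ω)
    (hcondvar₂ : P[(fun ω => (Y₂ ω - μ₂ * ν₂ ω) ^ 2) | MeasurableSpace.comap ν₁ inferInstance ⊔ MeasurableSpace.comap ν₂ inferInstance]
      =ᵐ[P] fun ω => μ₂ * ν₂ ω)
    (hcondprod : P[(fun ω => Y₁ ω * Y₂ ω) | MeasurableSpace.comap ν₁ inferInstance ⊔ MeasurableSpace.comap ν₂ inferInstance]
      =ᵐ[P] fun ω => μ₁ * ν₁ ω * (μ₂ * ν₂ ω)) :
    ((∫ ω, (Y₁ ω - μ₁) ^ 2 ∂P) - μ₁ = μ₁ ^ 2 * (Real.exp (σ ^ 2) - 1)) ∧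
    (∫ ω, (Y₁ ω - μ₁) * (Y₂ ω - μ₂) ∂P = μ₁ * μ₂ * (Real.exp (σ ^ 2 * ρ) - 1)) := by
  subst hZ₁ hZ₂
  have hρsq : (0:ℝ) ≤ 1 - ρ ^ 2 := by nlinarith [hρ.1, hρ.2]
  -- measurability
  have hν₁meas : Measurable ν₁ := by
    rw [hν₁]; exact (measurable_const.add (hUmeas.const_mul σ)).exp
  have hν₂meas : Measurable ν₂ := by
    rw [hν₂]
    exact (measurable_const.add (((hUmeas.const_mul ρ).add (hVmeas.const_mul _)).const_mul σ)).exp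
  have hν₂eq : ν₂ = fun ω => Real.exp (-σ ^ 2 / 2) *
      (Real.exp ((σ * ρ) * U ω) * Real.exp ((σ * Real.sqrt (1 - ρ ^ 2)) * V ω)) := by
    rw [hν₂]; funext ω
    rw [← Real.exp_add, ← Real.exp_add]; ring_nf
  have hm : (MeasurableSpace.comap ν₁ inferInstance ⊔ MeasurableSpace.comap ν₂ inferInstance)
      ≤ (inferInstance : MeasurableSpace Ω) :=
    sup_le (measurable_iff_comap_le.mp hν₁meas) (measurable_iff_comap_le.mp hν₂meas)
  have hν₁sm : StronglyMeasurable[MeasurableSpace.comap ν₁ inferInstance ⊔ MeasurableSpace.comap ν₂ inferInstance] ν₁ :=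
    by
    have h0 : Measurable[MeasurableSpace.comap ν₁ inferInstance] ν₁ :=
      measurable_iff_comap_le.mpr le_rfl
    have h1 : Measurable[MeasurableSpace.comap ν₁ inferInstance ⊔ MeasurableSpace.comap ν₂ inferInstance] ν₁ :=
      h0.mono le_sup_left le_rfl
    exact h1.stronglyMeasurable
  -- rewrite ν₁ as const * exp(σ U)
  have hν₁eq : ν₁ = fun ω => Real.exp (-σ ^ 2 / 2) * Real.exp (σ * U ω) := by
    rw [hν₁]; funext ω; rw [← Real.exp_add]
  have hν₁sq : (fun ω => ν₁ ω ^ 2) = fun ω => Real.exp (-σ ^ 2) * Real.exp ((2 * σ) * U ω) := by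
    rw [hν₁]; funext ω; rw [← Real.exp_add, ← Real.exp_nat_mul]; ring_nf
  have hν₁ν₂ : (fun ω => ν₁ ω * ν₂ ω)
      = fun ω => Real.exp (-σ ^ 2) *
        (Real.exp ((σ * (1 + ρ)) * U ω) * Real.exp ((σ * Real.sqrt (1 - ρ ^ 2)) * V ω)) := by
    rw [hν₁, hν₂]; funext ω
    rw [← Real.exp_add, ← Real.exp_add, ← Real.exp_add]; ring_nf
  -- first moments
  have hint1 : Integrable ν₁ P := by
    rw [hν₁eq]; exact ((gauss_exp_omega hUmeas hU σ).1.const_mul _)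
  have hI1 : ∫ ω, ν₁ ω ∂P = 1 := by
    rw [hν₁eq, integral_const_mul, (gauss_exp_omega hUmeas hU σ).2, ← Real.exp_add,
      show -σ ^ 2 / 2 + σ ^ 2 / 2 = 0 by ring, Real.exp_zero]
  have hint2 : Integrable (fun ω => ν₁ ω ^ 2) P := by
    rw [hν₁sq]; exact ((gauss_exp_omega hUmeas hU (2 * σ)).1.const_mul _)
  have hI2 : ∫ ω, ν₁ ω ^ 2 ∂P = Real.exp (σ ^ 2) := by
    rw [hν₁sq, integral_const_mul, (gauss_exp_omega hUmeas hU (2 * σ)).2, ← Real.exp_add]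
    congr 1; ring
  have hν₁L2 : MemLp ν₁ 2 P :=
    (memLp_two_iff_integrable_sq hν₁meas.aestronglyMeasurable).mpr hint2
  -- cross moment of ν₁ ν₂ via independence
  have hindep : IndepFun (fun ω => Real.exp ((σ * (1 + ρ)) * U ω))
      (fun ω => Real.exp ((σ * Real.sqrt (1 - ρ ^ 2)) * V ω)) P :=
    hUV.comp (measurable_const_mul _).exp (measurable_const_mul _).exp
  have hintU := (gauss_exp_omega hUmeas hU (σ * (1 + ρ)))
  have hintV := (gauss_exp_omega hVmeas hV (σ * Real.sqrt (1 - ρ ^ 2)))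
  have hmulUV := hindep.integrable_mul hintU.1 hintV.1
  have hintmulUV : Integrable (fun ω => Real.exp ((σ * (1 + ρ)) * U ω) * Real.exp ((σ * Real.sqrt (1 - ρ ^ 2)) * V ω)) P :=
    hmulUV.congr (ae_of_all _ fun ω => rfl)
  have hImulUV : ∫ ω, Real.exp ((σ * (1 + ρ)) * U ω) * Real.exp ((σ * Real.sqrt (1 - ρ ^ 2)) * V ω) ∂P
      = (∫ ω, Real.exp ((σ * (1 + ρ)) * U ω) ∂P) * ∫ ω, Real.exp ((σ * Real.sqrt (1 - ρ ^ 2)) * V ω) ∂P :=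
    hindep.integral_fun_mul_eq_mul_integral hintU.1.aestronglyMeasurable hintV.1.aestronglyMeasurable
  have hint12 : Integrable (fun ω => ν₁ ω * ν₂ ω) P := by
    rw [hν₁ν₂]; exact hintmulUV.const_mul _
  have hI12 : ∫ ω, ν₁ ω * ν₂ ω ∂P = Real.exp (σ ^ 2 * ρ) := by
    rw [hν₁ν₂, integral_const_mul, hImulUV,
      hintU.2, hintV.2, ← Real.exp_add, ← Real.exp_add]
    congr 1
    have : Real.sqrt (1 - ρ ^ 2) ^ 2 = 1 - ρ ^ 2 := Real.sq_sqrt hρsq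
    nlinarith [this]
  -- integrability of Y's and products
  have hY₁int : Integrable Y₁ P := hY₁.integrable one_le_two
  have hY₂int : Integrable Y₂ P := hY₂.integrable one_le_two
  have hYYint : Integrable (fun ω => Y₁ ω * Y₂ ω) P := L2mul hY₁ hY₂
  have hνYint : Integrable (fun ω => ν₁ ω * Y₁ ω) P := L2mul hν₁L2 hY₁
  have hdiffL2 : MemLp (fun ω => Y₁ ω - μ₁ * ν₁ ω) 2 P :=
    MemLp.ae_eq (ae_of_all _ fun ω => rfl) (hY₁.sub (hν₁L2.const_mul μ₁))
  have hvarint : Integrable (fun ω => (Y₁ ω - μ₁ * ν₁ ω) ^ 2) P := hdiffL2.integrable_sq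
  -- expectations via conditional expectations
  have hEY₁ : ∫ ω, Y₁ ω ∂P = μ₁ := by
    rw [← integral_condExp hm (f := Y₁), integral_congr_ae hcond₁, integral_const_mul, hI1, mul_one]
  have hindep2 : IndepFun (fun ω => Real.exp ((σ * ρ) * U ω))
      (fun ω => Real.exp ((σ * Real.sqrt (1 - ρ ^ 2)) * V ω)) P :=
    hUV.comp (measurable_const_mul _).exp (measurable_const_mul _).exp
  have hIν₂ : ∫ ω, ν₂ ω ∂P = 1 := by
    have hImul2 : ∫ ω, Real.exp ((σ * ρ) * U ω) * Real.exp ((σ * Real.sqrt (1 - ρ ^ 2)) * V ω) ∂P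
        = (∫ ω, Real.exp ((σ * ρ) * U ω) ∂P) * ∫ ω, Real.exp ((σ * Real.sqrt (1 - ρ ^ 2)) * V ω) ∂P :=
      hindep2.integral_fun_mul_eq_mul_integral (gauss_exp_omega hUmeas hU (σ * ρ)).1.aestronglyMeasurable
        (gauss_exp_omega hVmeas hV (σ * Real.sqrt (1 - ρ ^ 2))).1.aestronglyMeasurable
    rw [hν₂eq, integral_const_mul, hImul2,
      (gauss_exp_omega hUmeas hU (σ * ρ)).2,
      (gauss_exp_omega hVmeas hV (σ * Real.sqrt (1 - ρ ^ 2))).2,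
      ← Real.exp_add, ← Real.exp_add, Real.exp_eq_one_iff]
    have hs : Real.sqrt (1 - ρ ^ 2) ^ 2 = 1 - ρ ^ 2 := Real.sq_sqrt hρsq
    nlinarith [hs]
  have hEY₂ : ∫ ω, Y₂ ω ∂P = μ₂ := by
    rw [← integral_condExp hm (f := Y₂), integral_congr_ae hcond₂, integral_const_mul, hIν₂, mul_one]
  have hEvar : ∫ ω, (Y₁ ω - μ₁ * ν₁ ω) ^ 2 ∂P = μ₁ := by
    rw [← integral_condExp hm (f := fun ω => (Y₁ ω - μ₁ * ν₁ ω) ^ 2), integral_congr_ae hcondvar₁, integral_const_mul, hI1, mul_one]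
  have hEYY : ∫ ω, Y₁ ω * Y₂ ω ∂P = μ₁ * μ₂ * Real.exp (σ ^ 2 * ρ) := by
    rw [← integral_condExp hm (f := fun ω => Y₁ ω * Y₂ ω), integral_congr_ae hcondprod]
    have : (fun ω => μ₁ * ν₁ ω * (μ₂ * ν₂ ω)) = fun ω => (μ₁ * μ₂) * (ν₁ ω * ν₂ ω) := by
      funext ω; ring
    rw [this, integral_const_mul, hI12]
  -- pull-out: E[ν₁ Y₁]
  have hEνY : ∫ ω, ν₁ ω * Y₁ ω ∂P = μ₁ * Real.exp (σ ^ 2) := by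
    have hνY' : Integrable (ν₁ * Y₁) P := hνYint
    have hpull := condExp_mul_of_stronglyMeasurable_left hν₁sm hνY' hY₁int
    have h2 : P[(fun ω => ν₁ ω * Y₁ ω)|MeasurableSpace.comap ν₁ inferInstance ⊔ MeasurableSpace.comap ν₂ inferInstance] =ᵐ[P] fun ω => ν₁ ω * (μ₁ * ν₁ ω) := by
      refine hpull.trans ?_
      filter_upwards [hcond₁] with ω hω
      simp only [Pi.mul_apply, hω]
    rw [← integral_condExp hm (f := fun ω => ν₁ ω * Y₁ ω), integral_congr_ae h2]
    have : (fun ω => ν₁ ω * (μ₁ * ν₁ ω)) = fun ω => μ₁ * ν₁ ω ^ 2 := by funext ω; ring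
    rw [this, integral_const_mul, hI2]
  -- second moment of Y₁
  have hEY1sq : ∫ ω, Y₁ ω ^ 2 ∂P = μ₁ + μ₁ ^ 2 * Real.exp (σ ^ 2) := by
    have key : (fun ω => Y₁ ω ^ 2)
        = fun ω => ((Y₁ ω - μ₁ * ν₁ ω) ^ 2 + (2 * μ₁) * (ν₁ ω * Y₁ ω)) - μ₁ ^ 2 * ν₁ ω ^ 2 := by
      funext ω; ring
    rw [key, integral_sub (f := fun ω => (Y₁ ω - μ₁ * ν₁ ω) ^ 2 + (2 * μ₁) * (ν₁ ω * Y₁ ω))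
        (g := fun ω => μ₁ ^ 2 * ν₁ ω ^ 2) (hvarint.add (hνYint.const_mul _)) (hint2.const_mul _),
      integral_add (f := fun ω => (Y₁ ω - μ₁ * ν₁ ω) ^ 2) (g := fun ω => (2 * μ₁) * (ν₁ ω * Y₁ ω))
        hvarint (hνYint.const_mul _), integral_const_mul, integral_const_mul,
      hEvar, hEνY, hI2]
    ring
  constructor
  · have key : (fun ω => (Y₁ ω - μ₁) ^ 2)
        = fun ω => (Y₁ ω ^ 2 - (2 * μ₁) * Y₁ ω) + μ₁ ^ 2 := by funext ω; ring
    rw [key, integral_add (f := fun ω => Y₁ ω ^ 2 - (2 * μ₁) * Y₁ ω) (g := fun _ => μ₁ ^ 2)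
        (hY₁.integrable_sq.sub (hY₁int.const_mul _)) (integrable_const _),
      integral_sub (f := fun ω => Y₁ ω ^ 2) (g := fun ω => (2 * μ₁) * Y₁ ω)
        hY₁.integrable_sq (hY₁int.const_mul _), integral_const_mul,
      integral_const, hEY1sq, hEY₁]
    simp [measure_univ]
    ring
  · have key : (fun ω => (Y₁ ω - μ₁) * (Y₂ ω - μ₂))
        = fun ω => (Y₁ ω * Y₂ ω - (μ₂ * Y₁ ω + μ₁ * Y₂ ω)) + μ₁ * μ₂ := by funext ω; ring
    rw [key, integral_add (f := fun ω => Y₁ ω * Y₂ ω - (μ₂ * Y₁ ω + μ₁ * Y₂ ω))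
        (g := fun _ => μ₁ * μ₂)
        (hYYint.sub ((hY₁int.const_mul _).add (hY₂int.const_mul _))) (integrable_const _),
      integral_sub (f := fun ω => Y₁ ω * Y₂ ω) (g := fun ω => μ₂ * Y₁ ω + μ₁ * Y₂ ω)
        hYYint ((hY₁int.const_mul _).add (hY₂int.const_mul _)),
      integral_add (f := fun ω => μ₂ * Y₁ ω) (g := fun ω => μ₁ * Y₂ ω)
        (hY₁int.const_mul _) (hY₂int.const_mul _), integral_const_mul,
      integral_const_mul, integral_const, hEYY, hEY₁, hEY₂]
    simp [measure_univ]
    ring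
end
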